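/- Let L(a,b) = (a − b)² and define f₁(a) = a², f₂(b) = b², h₁(a) = a, h₂(b) = 2b. Then for all real a, b: L(a,b) = f₁(a) + f₂(b) − h₁(a)·h₂(b). Consequently, for matrices A₁ ∈ ℝ^{n×n}, A₂ ∈ ℝ^{m×m} and a coupling π between ω₁ ∈ Δⁿ and ω₂ ∈ Δᵐ, the tensor contraction (L(A₁,A₂) ⊗ π)[i,j] = Σ_{k,l} (A₁[i,k] − A₂[j,l])²·π[k,l] equals [f₁(A₁)·ω₁·𝟙ᵀ + 𝟙·ω₂ᵀ·f₂(A₂)ᵀ − h₁(A₁)·π·h₂(A₂)ᵀ][i,j], where f₁, f₂, h₁, h₂ are applied entrywise. -/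
import Mathlib

theorem square_loss_decomposition {n m : ℕ}
    (A₁ : Fin n → Fin n → ℝ) (A₂ : Fin m → Fin m → ℝ)
    (ω₁ : Fin n → ℝ) (ω₂ : Fin m → ℝ)
    (hω₁ : ∀ i, 0 ≤ ω₁ i) (hω₂ : ∀ j, 0 ≤ ω₂ j)
    (hω₁sum : ∑ i, ω₁ i = 1) (hω₂sum : ∑ j, ω₂ j = 1)
    (π : Fin n → Fin m → ℝ)
    (hπ : ∀ i j, 0 ≤ π i j)
    (hrow : ∀ i, ∑ j, π i j = ω₁ i)
    (hcol : ∀ j, ∑ i, π i j = ω₂ j) :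
    (∀ a b : ℝ, (a - b) ^ 2 = a ^ 2 + b ^ 2 - a * (2 * b)) ∧
    (∀ (i : Fin n) (j : Fin m),
      ∑ k, ∑ l, (A₁ i k - A₂ j l) ^ 2 * π k l
        = (∑ k, (A₁ i k) ^ 2 * ω₁ k) + (∑ l, ω₂ l * (A₂ j l) ^ 2)
          - ∑ k, ∑ l, A₁ i k * π k l * (2 * A₂ j l)) := by
  refine ⟨fun a b => by ring, fun i j => ?_⟩
  have h1 : ∑ k, (A₁ i k) ^ 2 * ω₁ k = ∑ k, ∑ l, (A₁ i k) ^ 2 * π k l := by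
    refine Finset.sum_congr rfl fun k _ => ?_
    rw [← hrow k, Finset.mul_sum]
  have h2 : ∑ l, ω₂ l * (A₂ j l) ^ 2 = ∑ k, ∑ l, (A₂ j l) ^ 2 * π k l := by
    rw [Finset.sum_comm]
    refine Finset.sum_congr rfl fun l _ => ?_
    rw [← hcol l, Finset.sum_mul]
    exact Finset.sum_congr rfl fun k _ => by ring
  rw [h1, h2, ← Finset.sum_add_distrib, ← Finset.sum_sub_distrib]
  refine Finset.sum_congr rfl fun k _ => ?_
  rw [← Finset.sum_add_distrib, ← Finset.sum_sub_distrib]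
  exact Finset.sum_congr rfl fun l _ => by ring
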